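/- arXiv:patt-sol/9701011 — 4 statements merged into one kernel-verified Lean document; each statement's English description precedes it below -/
import Mathlib

section
/- If $\alpha \ne 0$, then $\Lambda_6 = \frac{3}{2\alpha}\left(\omega\Lambda_2 - \frac{3}{4}\Lambda_4\right)$; equivalently, $\frac{2}{3}\alpha\Lambda_6 = \omega\Lambda_2 - \frac{3}{4}\Lambda_4$. -/
/-!
Write `R₀² = 4ω / (1 + c cosh (2√ω z))` with `c = √(1 - β)`. After the substitution
`x = 2√ω z`, each `Λ_{2k}` is `(4ω)^k / (2√ω)` times `J_k = ∫ D⁻ᵏ`, where `D x = 1 + c cosh x`.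
Since `c² = 1 - β`, one has `(sinh / D²)' = -c⁻¹ (D⁻¹ - 3 D⁻² + 2β D⁻³)`, and both `sinh / D²` and
its derivative are integrable, so `J₁ - 3 J₂ + 2β J₃ = 0`; with `β = -16αω/3` this is the claim.
-/

open MeasureTheory Real

theorem Real.one_add_sq_div_two_le_cosh (x : ℝ) : 1 + x ^ 2 / 2 ≤ cosh x := by
  have h : |x / 2| ≤ |sinh (x / 2)| := by
    rw [abs_sinh]; exact self_le_sinh_iff.mpr (abs_nonneg _)
  have h2 : (x / 2) ^ 2 ≤ sinh (x / 2) ^ 2 := sq_le_sq.mpr h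
  have hc := cosh_two_mul (x / 2)
  rw [mul_div_cancel₀ x two_ne_zero, cosh_sq] at hc
  nlinarith

section

variable {c : ℝ}

theorem one_le_one_add_mul_cosh (hc : 0 ≤ c) (x : ℝ) : 1 ≤ 1 + c * cosh x :=
  le_add_of_nonneg_right (mul_nonneg hc (cosh_pos x).le)

theorem inv_one_add_mul_cosh_le (hc : 0 < c) (x : ℝ) :
    (1 + c * cosh x)⁻¹ ≤ 2 / c * (1 + x ^ 2)⁻¹ := by
  have hD : c / 2 * (1 + x ^ 2) ≤ 1 + c * cosh x := by
    nlinarith [one_add_sq_div_two_le_cosh x]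
  calc (1 + c * cosh x)⁻¹ ≤ (c / 2 * (1 + x ^ 2))⁻¹ := inv_anti₀ (by positivity) hD
    _ = 2 / c * (1 + x ^ 2)⁻¹ := by rw [mul_inv, inv_div]

theorem integrable_inv_one_add_mul_cosh_pow (hc : 0 < c) {n : ℕ} (hn : n ≠ 0) :
    Integrable fun x => (1 + c * cosh x)⁻¹ ^ n := by
  refine (integrable_inv_one_add_sq.const_mul (2 / c)).mono' (by fun_prop) (ae_of_all _ fun x => ?_)
  have h1 := one_le_one_add_mul_cosh hc.le x
  rw [norm_pow, Real.norm_of_nonneg (by positivity)]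
  calc (1 + c * cosh x)⁻¹ ^ n ≤ (1 + c * cosh x)⁻¹ :=
        pow_le_of_le_one (by positivity) (inv_le_one_of_one_le₀ h1) hn
    _ ≤ 2 / c * (1 + x ^ 2)⁻¹ := inv_one_add_mul_cosh_le hc x

theorem hasDerivAt_sinh_div_one_add_mul_cosh_sq (hc : 0 < c) (x : ℝ) :
    HasDerivAt (fun x => sinh x / (1 + c * cosh x) ^ 2)
      (-c⁻¹ * ((1 + c * cosh x)⁻¹ - 3 * (1 + c * cosh x)⁻¹ ^ 2
        + 2 * (1 - c ^ 2) * (1 + c * cosh x)⁻¹ ^ 3)) x := by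
  have := (hasDerivAt_sinh x).div ((((hasDerivAt_cosh x).const_mul c).const_add 1).fun_pow 2)
    (by positivity)
  refine this.congr_deriv ?_
  have hs := sinh_sq x
  field_simp
  linear_combination (-(2 * c ^ 2 + 2 * c ^ 3 * cosh x)) * hs

theorem norm_sinh_div_one_add_mul_cosh_sq_le (hc : 0 < c) (x : ℝ) :
    ‖sinh x / (1 + c * cosh x) ^ 2‖ ≤ c⁻¹ * (1 + c * cosh x)⁻¹ := by
  have hsinh : |sinh x| ≤ cosh x := by
    rw [abs_sinh, ← cosh_abs]; exact (sinh_lt_cosh _).le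
  rw [norm_div, norm_pow, Real.norm_eq_abs, Real.norm_of_nonneg (by positivity),
    div_le_iff₀ (by positivity)]
  calc |sinh x| ≤ c⁻¹ * (c * cosh x) := by rwa [inv_mul_cancel_left₀ hc.ne']
    _ ≤ c⁻¹ * (1 + c * cosh x) := by gcongr; linarith
    _ = c⁻¹ * (1 + c * cosh x)⁻¹ * (1 + c * cosh x) ^ 2 := by field_simp

theorem integral_inv_one_add_mul_cosh_relation (hc : 0 < c) :
    (∫ x, (1 + c * cosh x)⁻¹) - 3 * (∫ x, (1 + c * cosh x)⁻¹ ^ 2)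
      + 2 * (1 - c ^ 2) * (∫ x, (1 + c * cosh x)⁻¹ ^ 3) = 0 := by
  have i1 : Integrable fun x => (1 + c * cosh x)⁻¹ := by
    simpa using integrable_inv_one_add_mul_cosh_pow hc one_ne_zero
  have i2 : Integrable fun x => 3 * (1 + c * cosh x)⁻¹ ^ 2 :=
    (integrable_inv_one_add_mul_cosh_pow hc two_ne_zero).const_mul 3
  have i3 : Integrable fun x => 2 * (1 - c ^ 2) * (1 + c * cosh x)⁻¹ ^ 3 :=
    (integrable_inv_one_add_mul_cosh_pow hc three_ne_zero).const_mul _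
  have i12 : Integrable fun x => (1 + c * cosh x)⁻¹ - 3 * (1 + c * cosh x)⁻¹ ^ 2 := i1.sub i2
  have hderiv := integral_eq_zero_of_hasDerivAt_of_integrable
    (hasDerivAt_sinh_div_one_add_mul_cosh_sq hc) ((i12.add i3).const_mul _)
    ((i1.const_mul c⁻¹).mono'
      (continuous_sinh.div (by fun_prop) fun x => by positivity).aestronglyMeasurable
      (ae_of_all _ (norm_sinh_div_one_add_mul_cosh_sq_le hc)))
  rwa [integral_const_mul, mul_eq_zero, or_iff_right (by simpa using hc.ne'), integral_add
    i12 i3, integral_sub i1 i2, integral_const_mul, integral_const_mul] at hderiv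

theorem integral_sqrt_div_one_add_mul_cosh_pow {p : ℝ} (hp : 0 ≤ p) (hc : 0 ≤ c) (a : ℝ)
    (k : ℕ) : ∫ s, √(p / (1 + c * cosh (a * s))) ^ (2 * k)
      = p ^ k * |a⁻¹| * ∫ x, (1 + c * cosh x)⁻¹ ^ k := by
  have h (s : ℝ) :
      √(p / (1 + c * cosh (a * s))) ^ (2 * k) = p ^ k * (1 + c * cosh (a * s))⁻¹ ^ k := by
    rw [pow_mul, sq_sqrt (by positivity), div_eq_mul_inv, mul_pow]
  simp_rw [h, integral_const_mul, Measure.integral_comp_mul_left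
    (fun x => (1 + c * cosh x)⁻¹ ^ k), smul_eq_mul, mul_assoc]

end

theorem stmt4_general (ω α β : ℝ) (hω : 0 < ω) (hβ : β = -(16 / 3) * α * ω)
    (hβ1 : β < 1) (hα : α ≠ 0)
    (R0 : ℝ → ℝ)
    (hR0 : ∀ z : ℝ, R0 z =
      Real.sqrt (4 * ω / (1 + Real.sqrt (1 - β) * Real.cosh (2 * Real.sqrt ω * z)))) :
    (∫ s : ℝ, (R0 s) ^ 6) =
      (3 / (2 * α)) * (ω * (∫ s : ℝ, (R0 s) ^ 2) - (3 / 4) * ∫ s : ℝ, (R0 s) ^ 4) ∧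
    (2 / 3) * α * (∫ s : ℝ, (R0 s) ^ 6) =
      ω * (∫ s : ℝ, (R0 s) ^ 2) - (3 / 4) * ∫ s : ℝ, (R0 s) ^ 4 := by
  set c := √(1 - β)
  have hc : 0 < c := sqrt_pos.mpr (by linarith)
  have hΛ (m k : ℕ) (hm : m = 2 * k) : ∫ s, R0 s ^ m
      = (4 * ω) ^ k * |(2 * √ω)⁻¹| * ∫ x, (1 + c * cosh x)⁻¹ ^ k := by
    simp_rw [hm, hR0]
    exact integral_sqrt_div_one_add_mul_cosh_pow (by positivity) hc.le _ k
  have hrel := integral_inv_one_add_mul_cosh_relation hc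
  rw [sq_sqrt (by linarith), sub_sub_cancel, hβ] at hrel
  have hΛ6 :
      (2 / 3) * α * (∫ s, R0 s ^ 6) = ω * (∫ s, R0 s ^ 2) - (3 / 4) * ∫ s, R0 s ^ 4 := by
    rw [hΛ 2 1 rfl, hΛ 4 2 rfl, hΛ 6 3 rfl]
    simp only [pow_one]
    linear_combination (-4 * ω ^ 2 * |(2 * √ω)⁻¹|) * hrel
  refine ⟨?_, hΛ6⟩
  rw [← hΛ6]
  field_simp

/-- If `α ≠ 0` then `Λ₆ = (3/(2α)) (ω Λ₂ - (3/4) Λ₄)`; equivalently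
`(2/3) α Λ₆ = ω Λ₂ - (3/4) Λ₄`. -/
theorem stmt4 (ω α β : ℝ) (hω : 0 < ω) (hβ : β = -(16 / 3) * α * ω)
    (hβ0 : 0 ≤ β) (hβ1 : β < 1) (hα : α ≠ 0)
    (R0 : ℝ → ℝ)
    (hR0 : ∀ z : ℝ, R0 z =
      Real.sqrt (4 * ω / (1 + Real.sqrt (1 - β) * Real.cosh (2 * Real.sqrt ω * z)))) :
    (∫ s : ℝ, (R0 s) ^ 6) =
      (3 / (2 * α)) * (ω * (∫ s : ℝ, (R0 s) ^ 2) - (3 / 4) * ∫ s : ℝ, (R0 s) ^ 4) ∧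
    (2 / 3) * α * (∫ s : ℝ, (R0 s) ^ 6) =
      ω * (∫ s : ℝ, (R0 s) ^ 2) - (3 / 4) * ∫ s : ℝ, (R0 s) ^ 4 :=
  stmt4_general ω α β hω hβ hβ1 hα R0 hR0
end

section
/- Let $\phi_\epsilon : \mathbb{R} \to \mathbb{R}$ be defined by $\phi_\epsilon(z) = -\frac{1}{R_0(z)^2}\left[(b+a\omega)\int_{-\infty}^{z} R_0(s)^2\,ds + (d_1-a)\int_{-\infty}^{z} R_0(s)^4\,ds + (d_2-a\alpha)\int_{-\infty}^{z} R_0(s)^6\,ds\right]$. Then $2R_0(0)^2\,\phi_\epsilon(0) = \Lambda_2'\,a - \Lambda_2\,b - \Lambda_4\,d_1 - \Lambda_6\,d_2$. -/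
/-!
Write `R₀ = √(4ω / D)` with `D = 1 + √(1 - β) cosh (2√ω z)`. The profile is even and solves
`R₀'' = ω R₀ - R₀³ - α R₀⁵`; this is where `β = -16αω/3` enters. By evenness each integral over
`(-∞, 0]` is half the integral over `ℝ`, so
`2 R₀(0)² φ_ε(0) = -(b + aω)Λ₂ - (d₁ - a)Λ₄ - (d₂ - aα)Λ₆`.
Integrating `(R₀ R₀')' = R₀'² + ω R₀² - R₀⁴ - α R₀⁶` over `ℝ` (both `R₀ R₀'` and the right-hand
side are integrable, since `R₀² ≲ 1 / (1 + z²)` and `R₀'² ≤ ω R₀²`) gives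
`Λ₂' = Λ₄ + α Λ₆ - ω Λ₂`, which turns the previous line into the claim.
-/

open MeasureTheory Real Set

noncomputable def solitonDenom (ω β z : ℝ) : ℝ := 1 + √(1 - β) * cosh (2 * √ω * z)

noncomputable def soliton (ω β z : ℝ) : ℝ := √(4 * ω / solitonDenom ω β z)

noncomputable def solitonDeriv (ω β z : ℝ) : ℝ :=
  -(√ω * √(1 - β) * sinh (2 * √ω * z) * soliton ω β z / solitonDenom ω β z)

theorem integral_Iic_zero_of_even {E : Type*} [NormedAddCommGroup E] [NormedSpace ℝ E]
    {g : ℝ → E} (hg : Integrable g) (heven : ∀ x, g (-x) = g x) :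
    ∫ x in Iic 0, g x = (2 : ℝ)⁻¹ • ∫ x, g x := by
  have hIoi : ∫ x in Ioi 0, g x = ∫ x in Iic 0, g x := by
    simpa only [heven, neg_zero] using integral_comp_neg_Ioi 0 g
  rw [← intervalIntegral.integral_Iic_add_Ioi hg.integrableOn hg.integrableOn, hIoi,
    ← two_smul ℝ, smul_smul]
  norm_num

section Profile

variable {ω β : ℝ}

theorem one_le_solitonDenom (ω β z : ℝ) : 1 ≤ solitonDenom ω β z :=
  le_add_of_nonneg_right (mul_nonneg (sqrt_nonneg _) (cosh_pos _).le)

theorem solitonDenom_neg (ω β z : ℝ) : solitonDenom ω β (-z) = solitonDenom ω β z := by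
  simp only [solitonDenom, mul_neg, cosh_neg]

theorem hasDerivAt_solitonDenom (ω β z : ℝ) :
    HasDerivAt (solitonDenom ω β) (√(1 - β) * (sinh (2 * √ω * z) * (2 * √ω))) z :=
  (((hasDerivAt_id z).const_mul (2 * √ω)).cosh.const_mul _).const_add 1 |>.congr_deriv
    (by simp)

theorem one_add_mul_sq_le_solitonDenom (hω : 0 ≤ ω) (z : ℝ) :
    1 + 2 * √(1 - β) * ω * z ^ 2 ≤ solitonDenom ω β z := by
  have hsinh : ω * z ^ 2 ≤ sinh (√ω * z) ^ 2 := calc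
    ω * z ^ 2 = (√ω * z) ^ 2 := by rw [mul_pow, sq_sqrt hω]
    _ ≤ sinh (√ω * z) ^ 2 := by
      rw [sq_le_sq, abs_sinh]
      exact self_le_sinh_iff.mpr (abs_nonneg _)
  have hcosh : 1 + 2 * ω * z ^ 2 ≤ cosh (2 * √ω * z) := by
    rw [show 2 * √ω * z = 2 * (√ω * z) by ring, cosh_two_mul, cosh_sq]
    linarith
  unfold solitonDenom
  nlinarith [sqrt_nonneg (1 - β)]

theorem soliton_sq (hω : 0 ≤ ω) (z : ℝ) : soliton ω β z ^ 2 = 4 * ω / solitonDenom ω β z :=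
  sq_sqrt (div_nonneg (by positivity) (zero_le_one.trans (one_le_solitonDenom ω β z)))

theorem soliton_nonneg (ω β z : ℝ) : 0 ≤ soliton ω β z :=
  sqrt_nonneg _

theorem soliton_pos (hω : 0 < ω) (z : ℝ) : 0 < soliton ω β z :=
  sqrt_pos.mpr (div_pos (by positivity) (zero_lt_one.trans_le (one_le_solitonDenom ω β z)))

theorem soliton_le (hω : 0 ≤ ω) (z : ℝ) : soliton ω β z ≤ √(4 * ω) :=
  sqrt_le_sqrt (div_le_self (by positivity) (one_le_solitonDenom ω β z))

theorem soliton_neg (ω β z : ℝ) : soliton ω β (-z) = soliton ω β z := by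
  simp only [soliton, solitonDenom_neg]

theorem hasDerivAt_soliton (hω : 0 < ω) (z : ℝ) :
    HasDerivAt (soliton ω β) (solitonDeriv ω β z) z := by
  have hD := one_le_solitonDenom ω β z
  have hq : 0 < 4 * ω / solitonDenom ω β z := by positivity
  have hR := soliton_pos (β := β) hω z
  refine ((hasDerivAt_const z (4 * ω)).div (hasDerivAt_solitonDenom ω β z)
    (by positivity)).sqrt hq.ne' |>.congr_deriv ?_
  simp only [Pi.div_apply]
  change _ / (2 * soliton ω β z) = _
  have hR2 : soliton ω β z ^ 2 * solitonDenom ω β z = 4 * ω := by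
    rw [soliton_sq hω.le]; field_simp
  unfold solitonDeriv
  field_simp
  linear_combination (2 * √ω * √(1 - β) * sinh (2 * √ω * z)) * hR2

theorem hasDerivAt_solitonDeriv (hω : 0 < ω) (hβ : β ≤ 1) {α : ℝ}
    (hαβ : β = -(16 / 3) * α * ω) (z : ℝ) :
    HasDerivAt (solitonDeriv ω β)
      (ω * soliton ω β z - soliton ω β z ^ 3 - α * soliton ω β z ^ 5) z := by
  have hD := one_le_solitonDenom ω β z
  have hcs : (√(1 - β) * sinh (2 * √ω * z)) ^ 2
      = (solitonDenom ω β z - 1) ^ 2 - (1 - β) := by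
    rw [solitonDenom, mul_pow, sinh_sq]
    linear_combination (-1 : ℝ) * sq_sqrt (sub_nonneg.mpr hβ)
  have hq : √ω ^ 2 = ω := sq_sqrt hω.le
  have hcC : √(1 - β) * cosh (2 * √ω * z) = solitonDenom ω β z - 1 := by
    rw [solitonDenom]; ring
  have hsinh : HasDerivAt (fun z => sinh (2 * √ω * z)) (cosh (2 * √ω * z) * (2 * √ω)) z :=
    ((hasDerivAt_id z).const_mul (2 * √ω)).sinh.congr_deriv (by simp)
  refine (((hsinh.const_mul (√ω * √(1 - β))).mul (hasDerivAt_soliton hω z)).div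
    (hasDerivAt_solitonDenom ω β z) (by positivity)).neg.congr_deriv ?_
  have hrhs : ω * soliton ω β z - soliton ω β z ^ 3 - α * soliton ω β z ^ 5
      = ω * soliton ω β z * (solitonDenom ω β z ^ 2 - 4 * solitonDenom ω β z + 3 * β)
        / solitonDenom ω β z ^ 2 := by
    rw [show soliton ω β z ^ 3 = soliton ω β z * soliton ω β z ^ 2 by ring,
      show soliton ω β z ^ 5 = soliton ω β z * (soliton ω β z ^ 2) ^ 2 by ring,
      soliton_sq hω.le]
    field_simp
    linear_combination (-3 * soliton ω β z) * hαβ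
  rw [hrhs, solitonDeriv]
  simp only [Pi.mul_apply]
  -- opaque atoms, so that `field_simp` does not reorder the arguments of `sinh` and `cosh`
  set s := sinh (2 * √ω * z)
  set C := cosh (2 * √ω * z)
  field_simp
  linear_combination
    (-soliton ω β z * (2 * √(1 - β) * C * solitonDenom ω β z - 3 * (√(1 - β) * s) ^ 2)) * hq
    - 2 * ω * soliton ω β z * solitonDenom ω β z * hcC + 3 * ω * soliton ω β z * hcs

theorem solitonDeriv_sq_le (hω : 0 ≤ ω) (z : ℝ) :
    solitonDeriv ω β z ^ 2 ≤ ω * soliton ω β z ^ 2 := by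
  have hD := one_le_solitonDenom ω β z
  have hc := sqrt_nonneg (1 - β)
  have hsC : |sinh (2 * √ω * z)| ≤ cosh (2 * √ω * z) := by
    rw [← sq_le_sq₀ (abs_nonneg _) (cosh_pos _).le, sq_abs, cosh_sq]; linarith
  have hcs : |√(1 - β) * sinh (2 * √ω * z)| ≤ solitonDenom ω β z := calc
    _ = √(1 - β) * |sinh (2 * √ω * z)| := by rw [abs_mul, abs_of_nonneg hc]
    _ ≤ √(1 - β) * cosh (2 * √ω * z) := mul_le_mul_of_nonneg_left hsC hc
    _ ≤ solitonDenom ω β z := by rw [solitonDenom]; linarith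
  have hratio : ((√(1 - β) * sinh (2 * √ω * z)) / solitonDenom ω β z) ^ 2 ≤ 1 := by
    rw [sq_le_one_iff_abs_le_one, abs_div, abs_of_pos (by linarith : 0 < solitonDenom ω β z)]
    exact div_le_one_of_le₀ hcs (by linarith)
  calc solitonDeriv ω β z ^ 2
      = ω * soliton ω β z ^ 2 * ((√(1 - β) * sinh (2 * √ω * z)) / solitonDenom ω β z) ^ 2 := by
        rw [solitonDeriv]
        linear_combination
          (soliton ω β z ^ 2 * ((√(1 - β) * sinh (2 * √ω * z)) / solitonDenom ω β z) ^ 2)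
            * sq_sqrt hω
    _ ≤ ω * soliton ω β z ^ 2 := mul_le_of_le_one_right (by positivity) hratio

theorem continuous_soliton (hω : 0 < ω) : Continuous (soliton ω β) :=
  continuous_iff_continuousAt.mpr fun z => (hasDerivAt_soliton hω z).continuousAt

theorem continuous_solitonDeriv (hω : 0 < ω) : Continuous (solitonDeriv ω β) := by
  have hD : Continuous (solitonDenom ω β) := by unfold solitonDenom; fun_prop
  exact (((by fun_prop : Continuous fun z => √ω * √(1 - β) * sinh (2 * √ω * z)).mul
    (continuous_soliton hω)).div hD fun z => by linarith [one_le_solitonDenom ω β z]).neg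

end Profile

section Integrability

variable {ω β : ℝ}

theorem integrable_soliton_sq (hω : 0 < ω) (hβ : β < 1) :
    Integrable fun z => soliton ω β z ^ 2 := by
  set m := min 1 (2 * √(1 - β) * ω)
  have hm : 0 < m := lt_min one_pos (by have := sqrt_pos.mpr (sub_pos.mpr hβ); positivity)
  refine (integrable_inv_one_add_sq.const_mul (4 * ω / m)).mono'
    ((continuous_soliton hω).pow 2).aestronglyMeasurable (ae_of_all _ fun z => ?_)
  have hDm : m * (1 + z ^ 2) ≤ solitonDenom ω β z := by
    have := one_add_mul_sq_le_solitonDenom (β := β) hω.le z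
    nlinarith [min_le_left 1 (2 * √(1 - β) * ω), min_le_right 1 (2 * √(1 - β) * ω),
      sq_nonneg z]
  rw [norm_of_nonneg (sq_nonneg _), soliton_sq hω.le, mul_comm, ← div_eq_mul_inv, div_div]
  exact div_le_div_of_nonneg_left (by positivity) (by positivity) (by linarith)

theorem integrable_soliton_pow (hω : 0 < ω) (hβ : β < 1) {n : ℕ} (hn : 2 ≤ n) :
    Integrable fun z => soliton ω β z ^ n := by
  obtain ⟨k, rfl⟩ := Nat.exists_eq_add_of_le' hn
  simp only [pow_add]
  refine (integrable_soliton_sq hω hβ).bdd_mul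
    ((continuous_soliton hω).pow k).aestronglyMeasurable (ae_of_all _ fun z => ?_)
    (c := √(4 * ω) ^ k)
  rw [norm_of_nonneg (pow_nonneg (soliton_nonneg ω β z) k)]
  exact pow_le_pow_left₀ (sqrt_nonneg _) (soliton_le hω.le z) k

theorem integrable_solitonDeriv_sq (hω : 0 < ω) (hβ : β < 1) :
    Integrable fun z => solitonDeriv ω β z ^ 2 := by
  refine ((integrable_soliton_sq hω hβ).const_mul ω).mono' ?_
    (ae_of_all _ fun z => by rw [norm_of_nonneg (sq_nonneg _)]; exact solitonDeriv_sq_le hω.le z)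
  exact ((continuous_solitonDeriv hω).pow 2).aestronglyMeasurable

theorem integral_solitonDeriv_sq (hω : 0 < ω) (hβ : β < 1) {α : ℝ}
    (hαβ : β = -(16 / 3) * α * ω) :
    ∫ z, solitonDeriv ω β z ^ 2
      = (∫ z, soliton ω β z ^ 4) + α * (∫ z, soliton ω β z ^ 6) - ω * ∫ z, soliton ω β z ^ 2 := by
  have h2 := integrable_soliton_pow hω hβ le_rfl
  have h4 := integrable_soliton_pow (n := 4) hω hβ (by norm_num)
  have h6 := integrable_soliton_pow (n := 6) hω hβ (by norm_num)
  have hd := integrable_solitonDeriv_sq hω hβ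
  have hprod : Integrable fun z => soliton ω β z * solitonDeriv ω β z := by
    refine ((h2.add hd).div_const 2).mono'
      ((continuous_soliton hω).mul (continuous_solitonDeriv hω)).aestronglyMeasurable
      (ae_of_all _ fun z => ?_)
    rw [Pi.add_apply, norm_mul, norm_eq_abs, norm_eq_abs, le_div_iff₀ two_pos,
      ← sq_abs (soliton ω β z), ← sq_abs (solitonDeriv ω β z)]
    nlinarith [two_mul_le_add_sq |soliton ω β z| |solitonDeriv ω β z|]
  have hderiv (z : ℝ) : HasDerivAt (fun z => soliton ω β z * solitonDeriv ω β z)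
      (solitonDeriv ω β z ^ 2 + ω * soliton ω β z ^ 2 - soliton ω β z ^ 4
        - α * soliton ω β z ^ 6) z :=
    ((hasDerivAt_soliton hω z).mul (hasDerivAt_solitonDeriv hω hβ.le hαβ z)).congr_deriv
      (by ring)
  have hd2 := hd.fun_add (h2.const_mul ω)
  have hd24 := hd2.sub' h4
  have hparts := integral_eq_zero_of_hasDerivAt_of_integrable hderiv
    (hd24.sub' (h6.const_mul α)) hprod
  rw [integral_sub hd24 (h6.const_mul α), integral_sub hd2 h4, integral_add hd (h2.const_mul ω),
    integral_const_mul, integral_const_mul] at hparts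
  linarith

end Integrability

theorem stmt7_general (ω α β a b d1 d2 : ℝ) (hω : 0 < ω) (hβ : β = -(16 / 3) * α * ω)
    (hβ1 : β < 1)
    (R0 : ℝ → ℝ)
    (hR0 : ∀ z : ℝ, R0 z =
      Real.sqrt (4 * ω / (1 + Real.sqrt (1 - β) * Real.cosh (2 * Real.sqrt ω * z))))
    (φε : ℝ → ℝ)
    (hφε : ∀ z : ℝ, φε z = -(1 / (R0 z) ^ 2) *
      ((b + a * ω) * (∫ s in Set.Iic z, (R0 s) ^ 2)
        + (d1 - a) * (∫ s in Set.Iic z, (R0 s) ^ 4)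
        + (d2 - a * α) * ∫ s in Set.Iic z, (R0 s) ^ 6)) :
    2 * (R0 0) ^ 2 * φε 0 =
      (∫ s : ℝ, (deriv R0 s) ^ 2) * a - (∫ s : ℝ, (R0 s) ^ 2) * b
        - (∫ s : ℝ, (R0 s) ^ 4) * d1 - (∫ s : ℝ, (R0 s) ^ 6) * d2 := by
  obtain rfl : R0 = soliton ω β := funext hR0
  have hderiv : deriv (soliton ω β) = solitonDeriv ω β :=
    funext fun z => (hasDerivAt_soliton hω z).deriv
  have hhalf (n : ℕ) (hn : 2 ≤ n) :
      ∫ s in Iic 0, soliton ω β s ^ n = (∫ s, soliton ω β s ^ n) / 2 := by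
    rw [integral_Iic_zero_of_even (integrable_soliton_pow hω hβ1 hn) fun s => by
      rw [soliton_neg], smul_eq_mul]
    ring
  have hR0_ne : soliton ω β 0 ≠ 0 := (soliton_pos hω 0).ne'
  rw [hφε, hhalf 2 le_rfl, hhalf 4 (by norm_num), hhalf 6 (by norm_num), hderiv,
    integral_solitonDeriv_sq hω hβ1 hβ]
  field_simp
  ring

/-- With `φ_ε` as in Statement 6,
`2 R₀(0)² φ_ε(0) = Λ₂' a - Λ₂ b - Λ₄ d₁ - Λ₆ d₂`. -/
theorem stmt7 (ω α β a b d1 d2 : ℝ) (hω : 0 < ω) (hβ : β = -(16 / 3) * α * ω)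
    (hβ0 : 0 ≤ β) (hβ1 : β < 1)
    (R0 : ℝ → ℝ)
    (hR0 : ∀ z : ℝ, R0 z =
      Real.sqrt (4 * ω / (1 + Real.sqrt (1 - β) * Real.cosh (2 * Real.sqrt ω * z))))
    (φε : ℝ → ℝ)
    (hφε : ∀ z : ℝ, φε z = -(1 / (R0 z) ^ 2) *
      ((b + a * ω) * (∫ s in Set.Iic z, (R0 s) ^ 2)
        + (d1 - a) * (∫ s in Set.Iic z, (R0 s) ^ 4)
        + (d2 - a * α) * ∫ s in Set.Iic z, (R0 s) ^ 6)) :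
    2 * (R0 0) ^ 2 * φε 0 =
      (∫ s : ℝ, (deriv R0 s) ^ 2) * a - (∫ s : ℝ, (R0 s) ^ 2) * b
        - (∫ s : ℝ, (R0 s) ^ 4) * d1 - (∫ s : ℝ, (R0 s) ^ 6) * d2 :=
  stmt7_general ω α β a b d1 d2 hω hβ hβ1 R0 hR0 φε hφε
end

section
/- The inequality $\Lambda_4 - 4\omega\Lambda_2 < 0$ holds, i.e. $\int_{-\infty}^{\infty} R_0(s)^4\,ds < 4\omega\int_{-\infty}^{\infty} R_0(s)^2\,ds$. -/
/-!
Writing `D z = 1 + √(1-β) cosh(2√ω z) > 1`, we have `R₀² = 4ω / D ∈ (0, 4ω)`, hence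
`R₀⁴ < 4ω R₀²` pointwise. Since `cosh` grows faster than `1 + z²`, `R₀²` is integrable, and a
strict pointwise inequality between integrable functions integrates to a strict inequality.
-/

open MeasureTheory

theorem MeasureTheory.integral_lt_integral_of_lt {α : Type*} [MeasurableSpace α] {μ : Measure α}
    [NeZero μ] {f g : α → ℝ} (hf : Integrable f μ) (hg : Integrable g μ)
    (hfg : ∀ x, f x < g x) : ∫ x, f x ∂μ < ∫ x, g x ∂μ := by
  have hsupport : Function.support (fun x => g x - f x) = Set.univ :=
    Set.eq_univ_of_forall fun x => (sub_pos.2 (hfg x)).ne'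
  have hpos : 0 < ∫ x, g x - f x ∂μ := by
    rw [integral_pos_iff_support_of_nonneg (fun x => (sub_pos.2 (hfg x)).le) (hg.sub hf),
      hsupport]
    exact Measure.measure_univ_pos.2 (NeZero.ne μ)
  rw [integral_sub hg hf] at hpos
  linarith

theorem Real.one_add_sq_le_four_mul_cosh (x : ℝ) : 1 + x ^ 2 ≤ 4 * Real.cosh x := by
  have hexp := Real.quadratic_le_exp_of_nonneg (abs_nonneg x)
  calc 1 + x ^ 2 ≤ 2 * (1 + |x| + |x| ^ 2 / 2) := by rw [sq_abs]; linarith [abs_nonneg x]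
    _ ≤ 2 * (Real.exp x + Real.exp (-x)) := by linarith [Real.exp_abs_le x]
    _ = 4 * Real.cosh x := by rw [Real.cosh_eq]; ring

theorem integrable_inv_one_add_mul_cosh {c : ℝ} (hc : 0 < c) :
    Integrable fun y : ℝ => (1 + c * Real.cosh y)⁻¹ := by
  refine (integrable_inv_one_add_sq.const_mul (4 / c)).mono'
    (by fun_prop) (ae_of_all _ fun y => ?_)
  have hcosh := Real.one_add_sq_le_four_mul_cosh y
  have hD : 0 < 1 + c * Real.cosh y := by positivity
  rw [Real.norm_of_nonneg (inv_nonneg.2 hD.le)]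
  calc (1 + c * Real.cosh y)⁻¹ ≤ (c * (1 + y ^ 2) / 4)⁻¹ :=
        inv_anti₀ (by positivity) (by nlinarith)
    _ = 4 / c * (1 + y ^ 2)⁻¹ := by field_simp

theorem integral_sq_lt_mul_integral {α : Type*} [MeasurableSpace α] {μ : Measure α} [NeZero μ]
    {q : α → ℝ} {M : ℝ} (hq : Integrable q μ) (hpos : ∀ x, 0 < q x) (hlt : ∀ x, q x < M) :
    ∫ x, q x ^ 2 ∂μ < M * ∫ x, q x ∂μ := by
  have hsq_lt : ∀ x, q x ^ 2 < M * q x := fun x => by nlinarith [hpos x, hlt x]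
  have hsq : Integrable (fun x => q x ^ 2) μ :=
    (hq.const_mul M).mono' (hq.aestronglyMeasurable.pow 2) (ae_of_all _ fun x => by
      rw [Real.norm_of_nonneg (sq_nonneg _)]; exact (hsq_lt x).le)
  rw [← integral_const_mul]
  exact integral_lt_integral_of_lt hsq (hq.const_mul M) hsq_lt

theorem stmt10_general (ω β : ℝ) (hω : 0 < ω)
    (hβ1 : β < 1)
    (R0 : ℝ → ℝ)
    (hR0 : ∀ z : ℝ, R0 z =
      Real.sqrt (4 * ω / (1 + Real.sqrt (1 - β) * Real.cosh (2 * Real.sqrt ω * z)))) :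
    (∫ s : ℝ, (R0 s) ^ 4) < 4 * ω * ∫ s : ℝ, (R0 s) ^ 2 := by
  set c := Real.sqrt (1 - β)
  set k := 2 * Real.sqrt ω
  have hc : 0 < c := Real.sqrt_pos.2 (by linarith)
  have hk : k ≠ 0 := by positivity
  have hD : ∀ z, 1 < 1 + c * Real.cosh (k * z) := fun z => by
    have := Real.one_le_cosh (k * z); nlinarith
  have hR0_sq : ∀ z, R0 z ^ 2 = 4 * ω * (1 + c * Real.cosh (k * z))⁻¹ := fun z => by
    rw [hR0 z, Real.sq_sqrt (div_nonneg (by positivity) (by linarith [hD z])), div_eq_mul_inv]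
  have hint : Integrable fun z => R0 z ^ 2 := by
    simp only [hR0_sq]
    exact ((integrable_inv_one_add_mul_cosh hc).comp_mul_left' hk).const_mul _
  have hpos : ∀ z, 0 < R0 z ^ 2 := fun z => by
    rw [hR0_sq z]; have := hD z; positivity
  have hlt : ∀ z, R0 z ^ 2 < 4 * ω := fun z => by
    rw [hR0_sq z]; exact mul_lt_of_lt_one_right (by positivity) (inv_lt_one_of_one_lt₀ (hD z))
  simpa only [← pow_mul] using integral_sq_lt_mul_integral hint hpos hlt

/-- `Λ₄ - 4ω Λ₂ < 0`, i.e. `∫ R₀⁴ < 4ω ∫ R₀²`. -/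
theorem stmt10 (ω α β : ℝ) (hω : 0 < ω) (hβ : β = -(16 / 3) * α * ω)
    (hβ0 : 0 ≤ β) (hβ1 : β < 1)
    (R0 : ℝ → ℝ)
    (hR0 : ∀ z : ℝ, R0 z =
      Real.sqrt (4 * ω / (1 + Real.sqrt (1 - β) * Real.cosh (2 * Real.sqrt ω * z)))) :
    (∫ s : ℝ, (R0 s) ^ 4) < 4 * ω * ∫ s : ℝ, (R0 s) ^ 2 :=
  stmt10_general ω β hω hβ1 R0 hR0
end

section
/- Viewing $\Lambda_2$ and $\Lambda_4$ as functions of $\omega$ (with $\alpha$ fixed), the ratio $\Lambda_{24}(\omega) = \Lambda_2(\omega)/\Lambda_4(\omega)$ is differentiable and strictly decreasing: $\frac{d}{d\omega}\Lambda_{24}(\omega) < 0$ for all $\omega$ with $0 \le \beta(\omega) < 1$. -/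
/-!
Substituting `x = 2√ω s` gives `Λ_{2n}(ω) = (4ω)ⁿ / (2√ω) · ∫ (1 + a cosh x)⁻ⁿ dx` with
`a = √(1 - β)`, so `Λ₂₄ = I₁(a) / (4ω I₂(a))`. Both integrals are elementary. For `β = 0` this
gives `Λ₂₄ = 3 / (4ω)`; for `β = cω = k² ∈ (0, 1)` it gives `Λ₂₄ = c/4 · artanh k / (artanh k - k)`,
whose derivative in `k` has the sign of `artanh k - k / (1 - k²)`. That is negative: termwise,
the power series of `artanh k` is dominated by the geometric series `Σ k^(2n+1) = k / (1 - k²)`.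
-/

open MeasureTheory Real Filter Set Topology

namespace Real

variable {x : ℝ}

theorem artanh_eq_half_sub_log (hx : x ∈ Ioo (-1) 1) :
    artanh x = (log (1 + x) - log (1 - x)) / 2 := by
  rw [artanh_eq_half_log (Ioo_subset_Icc_self hx),
    log_div (by linarith [hx.1]) (by linarith [hx.2])]
  ring

theorem hasDerivAt_artanh (hx : x ∈ Ioo (-1) 1) : HasDerivAt artanh (1 - x ^ 2)⁻¹ x := by
  have hp : 1 + x ≠ 0 := by linarith [hx.1]
  have hm : 1 - x ≠ 0 := by linarith [hx.2]
  have h := ((((hasDerivAt_id' x).const_add 1).log hp).sub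
    (((hasDerivAt_id' x).const_sub 1).log hm)).div_const 2
  refine (h.congr_of_eventuallyEq ?_).congr_deriv ?_
  · filter_upwards [isOpen_Ioo.mem_nhds hx] with y hy using artanh_eq_half_sub_log hy
  · have : 1 - x ^ 2 ≠ 0 := by rw [show 1 - x ^ 2 = (1 + x) * (1 - x) by ring]; positivity
    field_simp
    ring

theorem hasSum_artanh (hx : |x| < 1) :
    HasSum (fun n : ℕ => x ^ (2 * n + 1) / (2 * n + 1)) (artanh x) := by
  have h := (hasSum_log_sub_log_of_abs_lt_one hx).div_const 2
  rw [← artanh_eq_half_sub_log (abs_lt.1 hx)] at h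
  have e : (fun n : ℕ => 2 * (1 / (2 * (n : ℝ) + 1)) * x ^ (2 * n + 1) / 2) =
      fun n : ℕ => x ^ (2 * n + 1) / (2 * n + 1) := funext fun n => by ring
  rwa [e] at h

theorem lt_artanh (hx : x ∈ Ioo 0 1) : x < artanh x := by
  obtain ⟨hx0, hx1⟩ := hx
  have h0 : HasSum (Pi.single 0 x : ℕ → ℝ) x := hasSum_pi_single 0 x
  refine hasSum_lt (i := 1) (fun n => ?_) ?_ h0 (hasSum_artanh (abs_lt.2 ⟨by linarith, hx1⟩))
  · rcases n with _ | n
    · simp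
    · rw [Pi.single_eq_of_ne n.add_one_ne_zero]
      positivity
  · rw [Pi.single_eq_of_ne one_ne_zero]
    positivity

theorem artanh_lt_div (hx : x ∈ Ioo 0 1) : artanh x < x / (1 - x ^ 2) := by
  have hx' : |x| < 1 := abs_lt.2 ⟨by linarith [hx.1], hx.2⟩
  have hgeom : HasSum (fun n : ℕ => x ^ (2 * n + 1)) (x / (1 - x ^ 2)) := by
    have := (hasSum_geometric_of_lt_one (sq_nonneg x) (by nlinarith [hx.1, hx.2])).mul_left x
    have e : (fun n : ℕ => x * (x ^ 2) ^ n) = fun n : ℕ => x ^ (2 * n + 1) :=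
      funext fun n => by ring
    rwa [e, ← div_eq_mul_inv] at this
  refine hasSum_lt (i := 1) (fun n => ?_) ?_ (hasSum_artanh hx') hgeom
  · have : 0 < x ^ (2 * n + 1) := pow_pos hx.1 _
    exact div_le_self this.le (by linarith [n.cast_nonneg (α := ℝ)])
  · have : 0 < x ^ (2 * 1 + 1) := pow_pos hx.1 _
    exact div_lt_self this (by norm_num)

theorem hasDerivAt_artanh_div_artanh_sub_self (hx : x ∈ Ioo 0 1) :
    HasDerivAt (fun y => artanh y / (artanh y - y))
      ((artanh x - x / (1 - x ^ 2)) / (artanh x - x) ^ 2) x := by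
  have hA := hasDerivAt_artanh ⟨by linarith [hx.1], hx.2⟩
  have hne : artanh x - x ≠ 0 := (sub_pos.2 (lt_artanh hx)).ne'
  have h1 : 1 - x ^ 2 ≠ 0 := by nlinarith [hx.1, hx.2]
  refine (hA.div (hA.sub (hasDerivAt_id' x)) hne).congr_deriv ?_
  simp only [Pi.sub_apply]
  field_simp
  ring

end Real

theorem integral_eq_sub_of_hasDerivAt_of_nonneg {f F : ℝ → ℝ} {l r : ℝ}
    (hF : ∀ x, HasDerivAt F (f x) x) (hf : ∀ x, 0 ≤ f x)
    (hbot : Tendsto F atBot (𝓝 l)) (htop : Tendsto F atTop (𝓝 r)) : ∫ x, f x = r - l := by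
  have hcont : Continuous F := continuous_iff_continuousAt.2 fun x => (hF x).continuousAt
  have hint : ∀ a b, IntervalIntegrable f volume a b := fun a b =>
    intervalIntegral.intervalIntegrable_deriv_of_nonneg hcont.continuousOn
      (fun x _ => hF x) fun x _ => hf x
  refine integral_of_hasDerivAt_of_tendsto hF ?_ hbot htop
  refine integrable_of_intervalIntegral_norm_tendsto (r - l) (fun n : ℕ => ?_)
    (tendsto_neg_atTop_atBot.comp tendsto_natCast_atTop_atTop) tendsto_natCast_atTop_atTop ?_
  · exact (hint _ _).1
  · simp only [Function.comp_apply, Real.norm_of_nonneg (hf _),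
      intervalIntegral.integral_eq_sub_of_hasDerivAt (fun x _ => hF x) (hint _ _)]
    exact (htop.comp tendsto_natCast_atTop_atTop).sub
      (hbot.comp (tendsto_neg_atTop_atBot.comp tendsto_natCast_atTop_atTop))

section Profile

variable {a k : ℝ}

/-- `Λ_{2n}(ω) = (4ω)ⁿ / (2√ω) · profileIntegral n a` with `a = √(1 - β(ω))`. -/
noncomputable def profileIntegral (n : ℕ) (a : ℝ) : ℝ := ∫ x, (1 + a * cosh x)⁻¹ ^ n

theorem one_add_mul_cosh_pos (ha : 0 ≤ a) (x : ℝ) : 0 < 1 + a * cosh x := by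
  have := cosh_pos x
  positivity

/-- Integrated over `ℝ`, this is the reduction formula `(1 - a²) I₂(a) = I₁(a) - 2`. -/
theorem hasDerivAt_mul_sinh_div (ha : 0 ≤ a) (x : ℝ) :
    HasDerivAt (fun x => a * sinh x / (1 + a * cosh x))
      ((1 + a * cosh x)⁻¹ - (1 - a ^ 2) * (1 + a * cosh x)⁻¹ ^ 2) x := by
  have hD := (one_add_mul_cosh_pos ha x).ne'
  refine (((hasDerivAt_sinh x).const_mul a).div
    (((hasDerivAt_cosh x).const_mul a).const_add 1) hD).congr_deriv ?_
  field_simp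
  linear_combination a ^ 2 * cosh_sq_sub_sinh_sq x

theorem tendsto_mul_sinh_div_atTop (ha : 0 < a) :
    Tendsto (fun x => a * sinh x / (1 + a * cosh x)) atTop (𝓝 1) := by
  have hcosh : Tendsto cosh atTop atTop :=
    tendsto_atTop_mono (fun x => by rw [cosh_eq]; linarith [exp_pos (-x)])
      (tendsto_exp_atTop.atTop_div_const two_pos)
  have hD : Tendsto (fun x => (1 + a * cosh x)⁻¹) atTop (𝓝 0) :=
    (tendsto_atTop_add_const_left _ 1 (hcosh.const_mul_atTop ha)).inv_tendsto_atTop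
  have hN : Tendsto (fun x => 1 + a * exp (-x)) atTop (𝓝 (1 + a * 0)) :=
    (tendsto_exp_neg_atTop_nhds_zero.const_mul a).const_add 1
  have h := (hN.mul hD).const_sub 1
  rw [mul_zero, sub_zero] at h
  refine h.congr fun x => ?_
  have hD := (one_add_mul_cosh_pos ha.le x).ne'
  rw [← cosh_sub_sinh]
  field_simp
  ring

theorem tendsto_mul_sinh_div_atBot (ha : 0 < a) :
    Tendsto (fun x => a * sinh x / (1 + a * cosh x)) atBot (𝓝 (-1)) := by
  refine ((tendsto_mul_sinh_div_atTop ha).comp tendsto_neg_atBot_atTop).neg.congr fun x => ?_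
  simp [neg_div]

theorem profileIntegral_one_one : profileIntegral 1 1 = 2 := by
  have h := integral_eq_sub_of_hasDerivAt_of_nonneg
    (fun x => (hasDerivAt_mul_sinh_div zero_le_one x).congr_deriv (by ring))
    (fun x => (inv_pos.2 (one_add_mul_cosh_pos zero_le_one x)).le)
    (tendsto_mul_sinh_div_atBot one_pos) (tendsto_mul_sinh_div_atTop one_pos)
  rw [profileIntegral]
  simp only [pow_one, h]
  norm_num

theorem profileIntegral_two_one : profileIntegral 2 1 = 2 / 3 := by
  set S := fun x : ℝ => 1 * sinh x / (1 + 1 * cosh x)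
  have hS : ∀ x, HasDerivAt S (1 + 1 * cosh x)⁻¹ x := fun x =>
    (hasDerivAt_mul_sinh_div zero_le_one x).congr_deriv (by ring)
  have hF : ∀ x, HasDerivAt (fun x => (S x - S x ^ 3 / 3) / 2) ((1 + 1 * cosh x)⁻¹ ^ 2) x := by
    intro x
    refine (((hS x).sub (((hS x).pow 3).div_const 3)).div_const 2).congr_deriv ?_
    have hD := (one_add_mul_cosh_pos zero_le_one x).ne'
    simp only [S, one_mul, Nat.cast_ofNat, Nat.add_one_sub_one] at hD ⊢
    field_simp
    linear_combination cosh_sq_sub_sinh_sq x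
  have hlim : ∀ {l : Filter ℝ} {s : ℝ}, Tendsto S l (𝓝 s) →
      Tendsto (fun x => (S x - S x ^ 3 / 3) / 2) l (𝓝 ((s - s ^ 3 / 3) / 2)) := fun h =>
    ((h.sub ((h.pow 3).div_const 3)).div_const 2)
  rw [profileIntegral, integral_eq_sub_of_hasDerivAt_of_nonneg hF (fun x => by positivity)
    (hlim (tendsto_mul_sinh_div_atBot one_pos)) (hlim (tendsto_mul_sinh_div_atTop one_pos))]
  norm_num

theorem hasDerivAt_neg_artanh_div_one_add_mul_exp (hk : k ∈ Ioo 0 1) (x : ℝ) :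
    HasDerivAt (fun x => -(2 / k) * artanh (k / (1 + √(1 - k ^ 2) * exp x)))
      (1 + √(1 - k ^ 2) * cosh x)⁻¹ x := by
  obtain ⟨hk0, hk1⟩ := hk
  set a := √(1 - k ^ 2)
  have ha2 : a ^ 2 = 1 - k ^ 2 := sq_sqrt (by nlinarith)
  have hE : 0 < a * exp x := mul_pos (sqrt_pos.2 (by nlinarith)) (exp_pos x)
  have hy : k / (1 + a * exp x) ∈ Ioo (-1) 1 := by
    constructor
    · have : 0 < k / (1 + a * exp x) := by positivity
      linarith
    · rw [div_lt_one (by positivity)]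
      linarith
  have hu : HasDerivAt (fun x => 1 + a * exp x) (a * exp x) x :=
    ((hasDerivAt_exp x).const_mul a).const_add 1
  refine (((hasDerivAt_artanh hy).comp x
    ((hasDerivAt_const x k).div hu (by positivity))).const_mul (-(2 / k))).congr_deriv ?_
  have hD : 1 - (k / (1 + a * exp x)) ^ 2 ≠ 0 := by nlinarith [hy.1, hy.2]
  rw [cosh_eq, exp_neg]
  field_simp
  have h1 : 0 < (1 + a * exp x) ^ 2 - k ^ 2 := by nlinarith
  have h2 : 0 < 2 * exp x + a * (exp x ^ 2 + 1) := by positivity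
  rw [neg_div', div_eq_div_iff h1.ne' h2.ne']
  linear_combination k * exp x * ha2

theorem tendsto_neg_artanh_div_one_add_mul_exp_atTop (hk : k ∈ Ioo 0 1) :
    Tendsto (fun x => -(2 / k) * artanh (k / (1 + √(1 - k ^ 2) * exp x))) atTop (𝓝 0) := by
  have ha : 0 < √(1 - k ^ 2) := sqrt_pos.2 (by nlinarith [hk.1, hk.2])
  have hy : Tendsto (fun x => k / (1 + √(1 - k ^ 2) * exp x)) atTop (𝓝 0) :=
    tendsto_const_nhds.div_atTop
      (tendsto_atTop_add_const_left _ 1 (tendsto_exp_atTop.const_mul_atTop ha))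
  have h := ((hasDerivAt_artanh (by norm_num)).continuousAt.tendsto.comp hy).const_mul (-(2 / k))
  rwa [artanh_zero, mul_zero] at h

theorem tendsto_neg_artanh_div_one_add_mul_exp_atBot (hk : k ∈ Ioo 0 1) :
    Tendsto (fun x => -(2 / k) * artanh (k / (1 + √(1 - k ^ 2) * exp x))) atBot
      (𝓝 (-(2 / k) * artanh k)) := by
  have hy : Tendsto (fun x => k / (1 + √(1 - k ^ 2) * exp x)) atBot
      (𝓝 (k / (1 + √(1 - k ^ 2) * 0))) :=
    tendsto_const_nhds.div ((tendsto_exp_atBot.const_mul _).const_add 1) (by simp)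
  rw [mul_zero, add_zero, div_one] at hy
  exact ((hasDerivAt_artanh ⟨by linarith [hk.1], hk.2⟩).continuousAt.tendsto.comp hy).const_mul _

theorem profileIntegral_one_sqrt (hk : k ∈ Ioo 0 1) :
    profileIntegral 1 √(1 - k ^ 2) = 2 * artanh k / k := by
  simp only [profileIntegral, pow_one]
  rw [integral_eq_sub_of_hasDerivAt_of_nonneg (hasDerivAt_neg_artanh_div_one_add_mul_exp hk)
    (fun x => (inv_pos.2 (one_add_mul_cosh_pos (sqrt_nonneg _) x)).le)
    (tendsto_neg_artanh_div_one_add_mul_exp_atBot hk)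
    (tendsto_neg_artanh_div_one_add_mul_exp_atTop hk)]
  ring

theorem profileIntegral_two_sqrt (hk : k ∈ Ioo 0 1) :
    profileIntegral 2 √(1 - k ^ 2) = 2 * (artanh k - k) / k ^ 3 := by
  have ha : 0 < √(1 - k ^ 2) := sqrt_pos.2 (by nlinarith [hk.1, hk.2])
  have ha2 : √(1 - k ^ 2) ^ 2 = 1 - k ^ 2 := sq_sqrt (by nlinarith [hk.1, hk.2])
  have hk0 : k ≠ 0 := hk.1.ne'
  have hF : ∀ x, HasDerivAt (fun x => (-(2 / k) * artanh (k / (1 + √(1 - k ^ 2) * exp x))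
      - √(1 - k ^ 2) * sinh x / (1 + √(1 - k ^ 2) * cosh x)) / k ^ 2)
      ((1 + √(1 - k ^ 2) * cosh x)⁻¹ ^ 2) x := fun x =>
    (((hasDerivAt_neg_artanh_div_one_add_mul_exp hk x).sub
      (hasDerivAt_mul_sinh_div ha.le x)).div_const _).congr_deriv (by field_simp; rw [ha2]; ring)
  rw [profileIntegral, integral_eq_sub_of_hasDerivAt_of_nonneg hF (fun x => by positivity)
    (((tendsto_neg_artanh_div_one_add_mul_exp_atBot hk).sub
      (tendsto_mul_sinh_div_atBot ha)).div_const _)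
    (((tendsto_neg_artanh_div_one_add_mul_exp_atTop hk).sub
      (tendsto_mul_sinh_div_atTop ha)).div_const _)]
  field_simp
  ring

end Profile

theorem integral_sqrt_pow_two_mul {ω a : ℝ} (hω : 0 < ω) (ha : 0 ≤ a) (n : ℕ) :
    ∫ s, √(4 * ω / (1 + a * cosh (2 * √ω * s))) ^ (2 * n) =
      (4 * ω) ^ n / (2 * √ω) * profileIntegral n a := by
  have h : ∀ s, √(4 * ω / (1 + a * cosh (2 * √ω * s))) ^ (2 * n) =
      (4 * ω) ^ n * (1 + a * cosh (2 * √ω * s))⁻¹ ^ n := fun s => by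
    rw [pow_mul, sq_sqrt (div_nonneg (by positivity) (one_add_mul_cosh_pos ha _).le),
      div_eq_mul_inv, mul_pow]
  simp_rw [h]
  rw [integral_const_mul, Measure.integral_comp_mul_left (fun x => (1 + a * cosh x)⁻¹ ^ n),
    abs_of_pos (by positivity), smul_eq_mul, profileIntegral]
  ring

theorem integral_sq_div_integral_pow_four {ω a : ℝ} (hω : 0 < ω) (ha : 0 ≤ a) :
    (∫ s, √(4 * ω / (1 + a * cosh (2 * √ω * s))) ^ 2) /
        ∫ s, √(4 * ω / (1 + a * cosh (2 * √ω * s))) ^ 4 =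
      profileIntegral 1 a / (4 * ω * profileIntegral 2 a) := by
  have h2 := integral_sqrt_pow_two_mul hω ha 1
  have h4 := integral_sqrt_pow_two_mul hω ha 2
  norm_num only at h2 h4
  rw [h2, h4]
  calc _ = 4 * ω / (2 * √ω) * profileIntegral 1 a /
        (4 * ω / (2 * √ω) * (4 * ω * profileIntegral 2 a)) := by ring
    _ = _ := mul_div_mul_left _ _ (by positivity)

/-- `Λ₂₄(ω)` when `β(ω) = c ω`. -/
noncomputable def lambdaRatio (c ω : ℝ) : ℝ :=
  profileIntegral 1 √(1 - c * ω) / (4 * ω * profileIntegral 2 √(1 - c * ω))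

theorem lambdaRatio_zero : lambdaRatio 0 = fun ω => 3 / 4 * ω⁻¹ := by
  funext ω
  simp only [lambdaRatio, zero_mul, sub_zero, sqrt_one, profileIntegral_one_one,
    profileIntegral_two_one]
  ring

theorem lambdaRatio_eq {c ω : ℝ} (h : c * ω ∈ Ioo 0 1) :
    lambdaRatio c ω = c / 4 * (artanh √(c * ω) / (artanh √(c * ω) - √(c * ω))) := by
  have hk : √(c * ω) ∈ Ioo 0 1 :=
    ⟨sqrt_pos.2 h.1, (sqrt_lt' one_pos).2 (by rw [one_pow]; exact h.2)⟩
  have hω : ω ≠ 0 := right_ne_zero_of_mul h.1.ne'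
  have hk2 : √(c * ω) ^ 2 = c * ω := sq_sqrt h.1.le
  have hA := (sub_pos.2 (lt_artanh hk)).ne'
  rw [lambdaRatio, show 1 - c * ω = 1 - √(c * ω) ^ 2 by rw [hk2],
    profileIntegral_one_sqrt hk, profileIntegral_two_sqrt hk]
  field_simp
  rw [hk2, mul_comm]

theorem exists_hasDerivAt_lambdaRatio_neg {c ω : ℝ} (hc : 0 ≤ c) (hω : 0 < ω) (h : c * ω < 1) :
    ∃ d < 0, HasDerivAt (lambdaRatio c) d ω := by
  rcases hc.eq_or_lt with rfl | hc
  · refine ⟨3 / 4 * -(ω ^ 2)⁻¹,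
      mul_neg_of_pos_of_neg (by norm_num) (neg_neg_of_pos (by positivity)), ?_⟩
    rw [lambdaRatio_zero]
    exact (hasDerivAt_inv hω.ne').const_mul _
  have hcω : c * ω ∈ Ioo 0 1 := ⟨mul_pos hc hω, h⟩
  have hk : √(c * ω) ∈ Ioo 0 1 :=
    ⟨sqrt_pos.2 hcω.1, (sqrt_lt' one_pos).2 (by rw [one_pow]; exact h)⟩
  have hsqrt : HasDerivAt (fun ω => √(c * ω)) (c / (2 * √(c * ω))) ω :=
    ((hasDerivAt_id' ω).const_mul c).sqrt hcω.1.ne' |>.congr_deriv (by ring)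
  refine ⟨_, ?_, (((hasDerivAt_artanh_div_artanh_sub_self hk).comp ω hsqrt).const_mul
    (c / 4)).congr_of_eventuallyEq ?_⟩
  · have hnum := sub_neg.2 (artanh_lt_div hk)
    have hden := sub_pos.2 (lt_artanh hk)
    have := hk.1
    exact mul_neg_of_pos_of_neg (by positivity)
      (mul_neg_of_neg_of_pos (div_neg_of_neg_of_pos hnum (by positivity)) (by positivity))
  · filter_upwards [((continuous_const_mul c).tendsto ω).eventually (isOpen_Ioo.mem_nhds hcω)]
      with ω' hω' using lambdaRatio_eq hω'

/-- Viewing `Λ₂, Λ₄` as functions of `ω` (with `α` fixed), the ratio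
`Λ₂₄(ω) = Λ₂(ω)/Λ₄(ω)` is differentiable and strictly decreasing
(`dΛ₂₄/dω < 0`) for all `ω > 0` with `0 ≤ β(ω) < 1`, where `β(ω) = -16αω/3`. -/
theorem stmt15 (α : ℝ)
    (R0 : ℝ → ℝ → ℝ)
    (hR0 : ∀ ω z : ℝ, R0 ω z =
      Real.sqrt (4 * ω / (1 + Real.sqrt (1 - (-(16 / 3) * α * ω))
        * Real.cosh (2 * Real.sqrt ω * z))))
    (Λ24 : ℝ → ℝ)
    (hΛ24 : ∀ ω : ℝ, Λ24 ω = (∫ s : ℝ, (R0 ω s) ^ 2) / ∫ s : ℝ, (R0 ω s) ^ 4) :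
    ∀ ω : ℝ, 0 < ω → 0 ≤ -(16 / 3) * α * ω → -(16 / 3) * α * ω < 1 →
      DifferentiableAt ℝ Λ24 ω ∧ deriv Λ24 ω < 0 := by
  intro ω hω hβ0 hβ1
  obtain ⟨d, hd, hG⟩ :=
    exists_hasDerivAt_lambdaRatio_neg (nonneg_of_mul_nonneg_left hβ0 hω) hω hβ1
  have hΛ : Λ24 =ᶠ[𝓝 ω] lambdaRatio (-(16 / 3) * α) := by
    filter_upwards [Ioi_mem_nhds hω] with ω' hω'
    simp only [hΛ24, hR0]
    exact integral_sq_div_integral_pow_four hω' (sqrt_nonneg _)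
  have hΛ' := hG.congr_of_eventuallyEq hΛ
  exact ⟨hΛ'.differentiableAt, hΛ'.deriv ▸ hd⟩
end
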